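/- Let H ≤ K ≤ G be subgroups with K of finite index m in G, and suppose H is infinite and almost malnormal in K. Then the height of H in G is at most m; that is, if g₁H, …, gₙH are distinct left cosets such that g₁Hg₁⁻¹ ∩ ⋯ ∩ gₙHgₙ⁻¹ is infinite, then n ≤ m. -/
import Mathlib


/-- If `H ≤ K ≤ G` with `[G:K] = m` finite, and `H` is infinite and almost
malnormal in `K`, then the height of `H` in `G` is at most `m`: any family of `n` distinct
cosets `gᵢH` with `⋂ gᵢHgᵢ⁻¹` infinite satisfies `n ≤ m`. -/
theorem stmt9 (G : Type*) [Group G] (H K : Subgroup G) (m : ℕ)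
    (hHK : H ≤ K) (hfi : K.FiniteIndex) (hind : K.index = m)
    (hinf : (H : Set G).Infinite)
    (hAM : ∀ k : G, k ∈ K → k ∉ H →
      ((H : Set G) ∩ ((fun y => k * y * k⁻¹) '' (H : Set G))).Finite) :
    ∀ n : ℕ, ∀ g : Fin n → G,
      (∀ i j : Fin n, i ≠ j → (g i)⁻¹ * g j ∉ H) →
      (⋂ i : Fin n, ((fun y => g i * y * (g i)⁻¹) '' (H : Set G))).Infinite →
      n ≤ m := by
  intro n g hdist hbig
  have hfin : Finite (G ⧸ K) := K.finite_quotient_of_finiteIndex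
  have hinj : Function.Injective (fun i : Fin n => (QuotientGroup.mk (g i) : G ⧸ K)) := by
    intro i j hij
    by_contra hne
    have hk : (g i)⁻¹ * g j ∈ K := QuotientGroup.eq.mp hij
    set k := (g i)⁻¹ * g j with hkdef
    have hkH : k ∉ H := hdist i j hne
    have hfin2 := hAM k hk hkH
    -- translate the big intersection into H ∩ kHk⁻¹
    have hmap : ∀ x ∈ (⋂ i : Fin n, ((fun y => g i * y * (g i)⁻¹) '' (H : Set G))),
        (g i)⁻¹ * x * g i ∈ ((H : Set G) ∩ ((fun y => k * y * k⁻¹) '' (H : Set G))) := by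
      intro x hx
      have hxi := Set.mem_iInter.mp hx i
      have hxj := Set.mem_iInter.mp hx j
      obtain ⟨a, ha, hax⟩ := hxi
      obtain ⟨b, hb, hbx⟩ := hxj
      constructor
      · have : (g i)⁻¹ * x * g i = a := by
          rw [← hax]; group
        rw [this]; exact ha
      · refine ⟨b, hb, ?_⟩
        rw [← hbx, hkdef]; group
    have : ((fun x => (g i)⁻¹ * x * g i) ''
        (⋂ i : Fin n, ((fun y => g i * y * (g i)⁻¹) '' (H : Set G)))).Infinite := by
      refine hbig.image ?_
      intro a _ b _ hab
      simpa using mul_left_cancel (mul_right_cancel hab)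
    exact this (hfin2.subset (by rintro _ ⟨x, hx, rfl⟩; exact hmap x hx))
  have := Nat.card_le_card_of_injective _ hinj
  simpa [Nat.card_eq_fintype_card, ← hind, Subgroup.index] using this
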